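/- arXiv:2408.09515 — 2 statements merged into one kernel-verified Lean document; each statement's English description precedes it below -/
import Mathlib

section
/- For the bipartite pure state |ψ⟩ = (1/√(d^k)) Σ_{i⃗ ∈ 𝔽_d^k} |i⃗⟩ ⊗ |i⃗A⟩ on (ℂ^d)^⊗k ⊗ (ℂ^d)^⊗m, where A is a k×m matrix over 𝔽_d (d prime), the rank of the reduced density matrix on the second subsystem equals d^{rank(A)}. -/
noncomputable section
open Matrix

/-- The bipartite pure state (1/√(d^k)) Σ_{i⃗ ∈ 𝔽_d^k} |i⃗⟩ ⊗ |i⃗A⟩. -/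
def bipState (d k m : ℕ) [NeZero d] (A : Matrix (Fin k) (Fin m) (ZMod d)) :
    ((Fin k → ZMod d) × (Fin m → ZMod d)) → ℂ :=
  fun p => if p.2 = Matrix.vecMul p.1 A then ((Real.sqrt (d ^ k) : ℂ))⁻¹ else 0

/-- The reduced density matrix on the second subsystem. -/
def secondReducedDM (d k m : ℕ) [NeZero d] (A : Matrix (Fin k) (Fin m) (ZMod d)) :
    Matrix (Fin m → ZMod d) (Fin m → ZMod d) ℂ :=
  Matrix.of fun b b' => ∑ a : Fin k → ZMod d,
    bipState d k m A (a, b) * star (bipState d k m A (a, b'))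

/-! The state is supported on the graph of `a ↦ a ᵥ* A`, so the reduced density matrix is diagonal,
its entry at `b` being the number of preimages of `b` divided by `d ^ k`. Its rank therefore counts
the image of `a ↦ a ᵥ* A`, the row space of `A`, which has `d ^ rank A` elements. -/

theorem Matrix.card_range_vecMul {K ι κ : Type*} [Field K] [Fintype K] [Fintype ι] [Fintype κ]
    (A : Matrix ι κ K) : Nat.card (Set.range fun v => v ᵥ* A) = Fintype.card K ^ A.rank := by
  classical
  rw [← rank_transpose, Matrix.rank, mulVecLin_transpose, ← coe_vecMulLinear, ← LinearMap.coe_range,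
    SetLike.coe_sort_coe, Nat.card_eq_fintype_card (α := LinearMap.range _),
    Module.card_eq_pow_finrank (K := K)]

theorem Matrix.rank_diagonal_card_fiber {R α β : Type*} [Field R] [CharZero R] [Fintype α]
    [Fintype β] [DecidableEq β] (f : α → β) {c : R} (hc : c ≠ 0) :
    (diagonal fun b => (Fintype.card {a // f a = b} : R) * c).rank = Nat.card (Set.range f) := by
  classical
  rw [rank_diagonal, ← Nat.card_eq_fintype_card]
  refine Nat.card_congr (Equiv.subtypeEquivRight fun b => ?_)
  simp [hc, Fintype.card_eq_zero_iff]

theorem inv_sqrt_pow_mul_self (d k : ℕ) :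
    ((√((d : ℝ) ^ k) : ℂ))⁻¹ * ((√((d : ℝ) ^ k) : ℂ))⁻¹ = ((d : ℂ) ^ k)⁻¹ := by
  rw [← mul_inv, ← Complex.ofReal_mul, Real.mul_self_sqrt (by positivity)]
  push_cast; rfl

section
variable {d k m : ℕ} [NeZero d] (A : Matrix (Fin k) (Fin m) (ZMod d))

theorem bipState_mul_star (a : Fin k → ZMod d) (b b' : Fin m → ZMod d) :
    bipState d k m A (a, b) * star (bipState d k m A (a, b')) =
      if b = b' ∧ a ᵥ* A = b then ((d : ℂ) ^ k)⁻¹ else 0 := by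
  unfold bipState
  split_ifs <;> simp_all [inv_sqrt_pow_mul_self]

theorem secondReducedDM_eq_diagonal :
    secondReducedDM d k m A =
      diagonal fun b => (Fintype.card {a // a ᵥ* A = b} : ℂ) * ((d : ℂ) ^ k)⁻¹ := by
  ext b b'
  rw [secondReducedDM, of_apply, diagonal_apply]
  simp_rw [bipState_mul_star]
  split_ifs with hbb'
  · simp [hbb', Fintype.card_subtype, Finset.sum_ite]
  · simp [hbb']
end

/-- For the state (1/√(d^k)) Σ_{i⃗} |i⃗⟩⊗|i⃗A⟩ with d prime, the rank of the
reduced density matrix on the second subsystem equals d^{rank(A)}. -/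
theorem reduced_rank_eq_d_pow_rank (d k m : ℕ) [Fact d.Prime] [NeZero d]
    (A : Matrix (Fin k) (Fin m) (ZMod d)) :
    (secondReducedDM d k m A).rank = d ^ A.rank := by
  have hweight : ((d : ℂ) ^ k)⁻¹ ≠ 0 := by simp [NeZero.ne d]
  rw [secondReducedDM_eq_diagonal, rank_diagonal_card_fiber _ hweight, card_range_vecMul, ZMod.card]
end
end

section
/- Define O = (H†⊗I⊗H†) ∘ (CZ₁₂ · CZ₂₃) ∘ (H⊗H⊗H) on (ℂ^d)^⊗3, where CZ₁₂ and CZ₂₃ are controlled-Z gates on the indicated pairs. Then for all i₁,i₂,i₃ ∈ ℤ/dℤ, O|i₁,i₂,i₃⟩ = (X^{i₁} ⊗ Z^{i₂} ⊗ X^{i₃}) (1/√d) Σ_{l=0}^{d-1} |l,l,l⟩; i.e., the three-qudit linear-chain construction generates the GHZ basis. -/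
noncomputable section
open Matrix Kronecker

/-- ω = e^(2πi/d). -/
def omg (d : ℕ) : ℂ := Complex.exp (2 * Real.pi * Complex.I / d)

/-- Generalized Pauli X: X|i⟩ = |i+1 mod d⟩. -/
def Xmat (d : ℕ) [NeZero d] : Matrix (ZMod d) (ZMod d) ℂ :=
  Matrix.of fun i j => if i = j + 1 then 1 else 0

/-- Generalized Pauli Z: Z|i⟩ = ω^i |i⟩. -/
def Zmat (d : ℕ) [NeZero d] : Matrix (ZMod d) (ZMod d) ℂ :=
  Matrix.diagonal fun i => omg d ^ i.val

/-- Qudit Hadamard gate: entries H_{l,i} = ω^(il)/√d. -/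
def Hmat (d : ℕ) [NeZero d] : Matrix (ZMod d) (ZMod d) ℂ :=
  Matrix.of fun l i => omg d ^ (i.val * l.val) / (Real.sqrt d : ℂ)

/-- CZ on qudits 1,2 of three qudits. -/
def CZ12 (d : ℕ) [NeZero d] :
    Matrix (ZMod d × ZMod d × ZMod d) (ZMod d × ZMod d × ZMod d) ℂ :=
  Matrix.diagonal fun p => omg d ^ (p.1 * p.2.1).val

/-- CZ on qudits 2,3 of three qudits. -/
def CZ23 (d : ℕ) [NeZero d] :
    Matrix (ZMod d × ZMod d × ZMod d) (ZMod d × ZMod d × ZMod d) ℂ :=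
  Matrix.diagonal fun p => omg d ^ (p.2.1 * p.2.2).val

/-- O = (H†⊗I⊗H†) ∘ (CZ₁₂·CZ₂₃) ∘ (H⊗H⊗H). -/
def Oop3 (d : ℕ) [NeZero d] :
    Matrix (ZMod d × ZMod d × ZMod d) (ZMod d × ZMod d × ZMod d) ℂ :=
  ((Hmat d)ᴴ ⊗ₖ ((1 : Matrix (ZMod d) (ZMod d) ℂ) ⊗ₖ (Hmat d)ᴴ)) *
    (CZ12 d * CZ23 d) * (Hmat d ⊗ₖ (Hmat d ⊗ₖ Hmat d))

/-- The GHZ vector (1/√d) Σ_l |l,l,l⟩. -/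
def ghz (d : ℕ) [NeZero d] : (ZMod d × ZMod d × ZMod d) → ℂ :=
  fun p => if p.1 = p.2.1 ∧ p.2.1 = p.2.2 then ((Real.sqrt d : ℂ))⁻¹ else 0

/-! Writing ψ for the standard additive character of `ZMod d`, every gate is a matrix of
characters: `H l i = ψ (l * i) / √d` and `CZ₁₂ * CZ₂₃ = diagonal ψ (y * (x + z))`. In the entry
`⟨p| O |i⟩` the middle qudit sees no `H†`, so its index is pinned to `p₂`; the two remaining sums
over the outer qudits are character sums `∑ x, ψ (x * (p₂ + i₁ - p₁))`, which by orthogonality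
vanish unless `p₁ = p₂ + i₁` (resp. `p₃ = p₂ + i₃`). This is exactly the support of
`(X^i₁ ⊗ Z^i₂ ⊗ X^i₃) GHZ`, with the same phase `ψ (p₂ * i₂) / √d`. -/

open ZMod (stdAddChar)

section
variable {d : ℕ} [NeZero d]

lemma omg_pow_eq_stdAddChar (n : ℕ) : omg d ^ n = stdAddChar (n : ZMod d) := by
  rw [ZMod.stdAddChar_apply, ZMod.toCircle_natCast, omg, ← Complex.exp_nat_mul]
  ring_nf

lemma star_stdAddChar (a : ZMod d) : star (stdAddChar a) = stdAddChar (-a) := by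
  rw [ZMod.stdAddChar_apply, ZMod.stdAddChar_apply, AddChar.map_neg_eq_inv, Circle.coe_inv_eq_conj]
  rfl

lemma Hmat_apply (l i : ZMod d) : Hmat d l i = stdAddChar (l * i) / (√d : ℝ) := by
  rw [Hmat, of_apply, omg_pow_eq_stdAddChar]
  push_cast
  simp [mul_comm]

lemma conjTranspose_Hmat_apply (i l : ZMod d) :
    (Hmat d)ᴴ i l = stdAddChar (-(l * i)) / (√d : ℝ) := by
  rw [conjTranspose_apply, Hmat_apply, star_div₀, star_stdAddChar, Complex.star_def, Complex.conj_ofReal]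

lemma CZ12_mul_CZ23 :
    CZ12 d * CZ23 d = diagonal fun p => stdAddChar (p.2.1 * (p.1 + p.2.2)) := by
  rw [CZ12, CZ23, diagonal_mul_diagonal]
  congr 1
  funext p
  rw [omg_pow_eq_stdAddChar, omg_pow_eq_stdAddChar, ← AddChar.map_add_eq_mul]
  simp only [ZMod.natCast_val, ZMod.cast_id', id]
  ring_nf

lemma Xmat_pow_apply (n : ℕ) (a b : ZMod d) :
    (Xmat d ^ n) a b = if a = b + n then 1 else 0 := by
  induction n generalizing b with
  | zero => simp [one_apply]
  | succ n ih =>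
    rw [pow_succ, mul_apply, Finset.sum_eq_single (b + 1)]
    · have hX : Xmat d (b + 1) b = 1 := by simp [Xmat]
      rw [ih, hX, mul_one, Nat.cast_succ, add_right_comm, add_assoc]
    · intro c _ hc
      simp [Xmat, hc]
    · simp

lemma Zmat_pow_apply (n : ℕ) (a b : ZMod d) :
    (Zmat d ^ n) a b = if a = b then stdAddChar (a * (n : ZMod d)) else 0 := by
  rw [Zmat, diagonal_pow, diagonal_apply, Pi.pow_apply, ← pow_mul, omg_pow_eq_stdAddChar]
  push_cast
  simp

lemma Oop3_apply_eq_mul_sum (p₁ p₂ p₃ i₁ i₂ i₃ : ZMod d) :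
    Oop3 d (p₁, p₂, p₃) (i₁, i₂, i₃) = stdAddChar (p₂ * i₂) / (√d : ℝ) ^ 5 *
      ((∑ x, stdAddChar (x * (p₂ + i₁ - p₁))) * ∑ z, stdAddChar (z * (p₂ + i₃ - p₃))) := by
  rw [Oop3, CZ12_mul_CZ23, mul_apply]
  simp only [mul_diagonal, Fintype.sum_prod_type, kroneckerMap_apply, one_apply,
    conjTranspose_Hmat_apply, Hmat_apply, ite_mul, one_mul, zero_mul, mul_ite, mul_zero, Finset.sum_ite_irrel,
    Finset.sum_const_zero, Finset.sum_ite_eq, Finset.mem_univ, if_true]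
  rw [Finset.sum_mul_sum, Finset.mul_sum]
  refine Finset.sum_congr rfl fun x _ => ?_
  rw [Finset.mul_sum]
  refine Finset.sum_congr rfl fun z _ => ?_
  rw [show p₂ * (x + z) = x * p₂ + z * p₂ by ring,
    show x * (p₂ + i₁ - p₁) = x * p₂ + x * i₁ + -(x * p₁) by ring,
    show z * (p₂ + i₃ - p₃) = z * p₂ + z * i₃ + -(z * p₃) by ring]
  simp only [AddChar.map_add_eq_mul]
  ring

lemma Oop3_apply (p₁ p₂ p₃ i₁ i₂ i₃ : ZMod d) :
    Oop3 d (p₁, p₂, p₃) (i₁, i₂, i₃) =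
      if p₁ = p₂ + i₁ ∧ p₃ = p₂ + i₃ then stdAddChar (p₂ * i₂) / (√d : ℝ) else 0 := by
  have hψ := ZMod.isPrimitive_stdAddChar d
  have hs2 : ((√d : ℝ) : ℂ) ^ 2 = d := by
    rw [← Complex.ofReal_pow, Real.sq_sqrt (Nat.cast_nonneg d), Complex.ofReal_natCast]
  rw [Oop3_apply_eq_mul_sum, AddChar.sum_mulShift _ hψ, AddChar.sum_mulShift _ hψ, ZMod.card]
  by_cases h₁ : p₁ = p₂ + i₁ <;> by_cases h₃ : p₃ = p₂ + i₃
  · simp only [h₁, h₃, sub_self, if_true, and_self, ← hs2]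
    field_simp
  all_goals simp [h₁, h₃, sub_eq_zero, eq_comm]

lemma kronecker_mulVec_ghz_apply (m n k : ℕ) (p₁ p₂ p₃ : ZMod d) :
    (((Xmat d ^ m) ⊗ₖ ((Zmat d ^ n) ⊗ₖ (Xmat d ^ k))) *ᵥ ghz d) (p₁, p₂, p₃) =
      if p₁ = p₂ + m ∧ p₃ = p₂ + k then stdAddChar (p₂ * (n : ZMod d)) / (√d : ℝ) else 0 := by
  simp only [mulVec, dotProduct, Fintype.sum_prod_type, kroneckerMap_apply, Xmat_pow_apply,
    Zmat_pow_apply, ghz]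
  simp only [mul_ite, mul_one, mul_zero, ite_mul, one_mul, zero_mul, ite_and, Finset.sum_ite_irrel,
    Finset.sum_ite_eq, Finset.mem_univ, if_true, Finset.sum_const_zero]
  rw [Fintype.sum_eq_single p₂ fun x hx => by simp [Ne.symm hx]]
  by_cases h₁ : p₁ = p₂ + m <;> by_cases h₃ : p₃ = p₂ + k <;> simp [h₁, h₃, div_eq_mul_inv]

end

/-- The three-qudit linear-chain construction generates the GHZ basis:
O|i₁,i₂,i₃⟩ = (X^{i₁} ⊗ Z^{i₂} ⊗ X^{i₃}) (1/√d) Σ_l |l,l,l⟩. -/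
theorem Oop3_ghz_basis (d : ℕ) [NeZero d] (i₁ i₂ i₃ : ZMod d) :
    (Oop3 d).mulVec (Pi.single (i₁, i₂, i₃) 1)
      = ((Xmat d ^ i₁.val) ⊗ₖ ((Zmat d ^ i₂.val) ⊗ₖ (Xmat d ^ i₃.val))).mulVec (ghz d) := by
  funext ⟨p₁, p₂, p₃⟩
  rw [mulVec_single_one, col_apply, Oop3_apply, kronecker_mulVec_ghz_apply]
  simp only [ZMod.natCast_val, ZMod.cast_id', id]
end
end
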